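/- Define the binary Shannon entropy H₂(x) = −x·log₂x − (1−x)·log₂(1−x), with the convention 0·log₂0 = 0. Then: (i) there exists p₁ ∈ (0.316, 0.317) with 1 − H₂(p₁) = p₁²; (ii) for all p ∈ [0.317, 1], 1 − H₂(p) ≤ p². Consequently, for all p ∈ [0.317, 1], the classical-trajectory upper bound Q_C^UB(p,p) = 1 − H₂(p) is at most the quantum-switch lower bound Q_QS^LB(p,p) = p² + max{0, 1 − p² + H₂(p²) − 2H₂(p)}. -/

import Mathlib

/-- The binary Shannon entropy `H₂(x) = −x·log₂x − (1−x)·log₂(1−x)`,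
with the convention `0·log₂0 = 0` (automatic since `Real.logb 2 0 = 0`). -/
noncomputable def H2 (x : ℝ) : ℝ := -(x * Real.logb 2 x) - (1 - x) * Real.logb 2 (1 - x)

/-- The bottleneck upper bound `Q_C^UB(p,q) = 1 − max{H₂(p), H₂(q)}` on any classical
trajectory. -/
noncomputable def QCUB (p q : ℝ) : ℝ := 1 - max (H2 p) (H2 q)

/-- The lower bound `Q_QS^LB(p,q)` on the quantum-switch capacity (Proposition 1). -/
noncomputable def QSLB (p q : ℝ) : ℝ :=
  p * q + max 0 (1 - p * q + H2 (p * q) - H2 p - H2 q)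

/-!
The function `g p = H₂ p + p²` is concave on `[0, 1]`, because `H₂'' p = -1 / (p (1 - p) log 2)`
is at most `-4 / log 2 < -2`. Since `g 1 = 1` and `g 0.317 > 1`, concavity gives `g ≥ 1` on
`[0.317, 1]`, which is (ii), and (iii) follows because `Q_QS^LB(p, p) ≥ p²`. As `g 0.316 < 1`,
(i) is the intermediate value theorem.

The two numerical values of `H₂` come from `1 - 1/x ≤ log x ≤ x - 1` applied to `x = p³ 2⁵` and
`x = (1 - p)¹¹ 2⁶`, which are close to `1` near `p = 0.316` since `log₂ p ≈ -5/3` and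
`log₂ (1 - p) ≈ -6/11`.
-/

open Real Set

lemma H2_eq_binEntropy_div (x : ℝ) : H2 x = binEntropy x / log 2 := by
  simp only [H2, binEntropy, logb, log_inv]
  ring

lemma H2_mul_log_two (x : ℝ) : H2 x * log 2 = -(x * log x) - (1 - x) * log (1 - x) := by
  rw [H2_eq_binEntropy_div, div_mul_cancel₀ _ (log_pos one_lt_two).ne', binEntropy, log_inv,
    log_inv]
  ring

lemma continuous_H2 : Continuous H2 := by
  simp only [funext H2_eq_binEntropy_div]
  exact binEntropy_continuous.div_const _

lemma H2_one : H2 1 = 0 := by simp [H2]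

lemma four_le_one_div_add_one_div_one_sub {p : ℝ} (hp₀ : 0 < p) (hp₁ : p < 1) :
    4 ≤ 1 / p + 1 / (1 - p) := by
  rw [div_add_div _ _ hp₀.ne' (sub_pos.2 hp₁).ne', le_div_iff₀ (mul_pos hp₀ (sub_pos.2 hp₁))]
  nlinarith [sq_nonneg (2 * p - 1)]

lemma concaveOn_binEntropy_add_mul_sq {c : ℝ} (hc : c ≤ 2) :
    ConcaveOn ℝ (Icc 0 1) (fun p ↦ binEntropy p + c * p ^ 2) := by
  refine concaveOn_of_hasDerivWithinAt2_nonpos (convex_Icc 0 1)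
    (f' := fun p ↦ log (1 - p) - log p + 2 * c * p)
    (f'' := fun p ↦ -(1 / (1 - p)) - 1 / p + 2 * c)
    (by fun_prop) (fun p hp ↦ ?_) (fun p hp ↦ ?_) (fun p hp ↦ ?_) <;>
    rw [interior_Icc] at hp <;> obtain ⟨hp₀, hp₁⟩ := hp
  · refine HasDerivAt.hasDerivWithinAt ?_
    convert (hasDerivAt_binEntropy hp₀.ne' hp₁.ne).fun_add ((hasDerivAt_pow 2 p).const_mul c)
      using 1
    ring
  · refine HasDerivAt.hasDerivWithinAt ?_
    have h1 := ((hasDerivAt_id' p).const_sub 1).log (sub_pos.2 hp₁).ne'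
    have h2 := (hasDerivAt_id' p).log hp₀.ne'
    convert (h1.fun_sub h2).fun_add ((hasDerivAt_id' p).const_mul (2 * c)) using 1
    ring
  · linarith [four_le_one_div_add_one_div_one_sub hp₀ hp₁]

lemma concaveOn_H2_add_sq : ConcaveOn ℝ (Icc 0 1) (fun p ↦ H2 p + p ^ 2) := by
  have h : (fun p ↦ H2 p + p ^ 2) = fun p ↦ (log 2)⁻¹ • (binEntropy p + log 2 * p ^ 2) := by
    ext p
    rw [H2_eq_binEntropy_div, smul_eq_mul]
    field_simp
  rw [h]
  exact (concaveOn_binEntropy_add_mul_sq (log_two_lt_d9.le.trans (by norm_num))).smul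
    (inv_nonneg.2 (log_pos one_lt_two).le)

lemma log_pow_mul_two_pow_bounds {x : ℝ} (hx : 0 < x) (n m : ℕ) :
    1 - (x ^ n * 2 ^ m)⁻¹ ≤ n * log x + m * log 2 ∧
      n * log x + m * log 2 ≤ x ^ n * 2 ^ m - 1 := by
  have hy : 0 < x ^ n * 2 ^ m := by positivity
  have hlog : log (x ^ n * 2 ^ m) = n * log x + m * log 2 := by
    rw [log_mul (by positivity) (by positivity), log_pow, log_pow]
  rw [← hlog]
  exact ⟨one_sub_inv_le_log_of_pos hy, log_le_sub_one_of_pos hy⟩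

lemma sq_lt_one_sub_H2_316 : (0.316 : ℝ) ^ 2 < 1 - H2 0.316 := by
  have hp := (log_pow_mul_two_pow_bounds (x := 0.316) (by norm_num) 3 5).1
  have hq := (log_pow_mul_two_pow_bounds (x := 0.684) (by norm_num) 11 6).1
  have key : H2 0.316 * log 2 < (1 - 0.316 ^ 2) * log 2 := by
    rw [H2_mul_log_two]
    norm_num at hp hq ⊢
    linarith [log_two_gt_d9]
  linarith [lt_of_mul_lt_mul_right key (log_pos one_lt_two).le]

lemma one_sub_H2_lt_sq_317 : 1 - H2 0.317 < (0.317 : ℝ) ^ 2 := by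
  have hp := (log_pow_mul_two_pow_bounds (x := 0.317) (by norm_num) 3 5).2
  have hq := (log_pow_mul_two_pow_bounds (x := 0.683) (by norm_num) 11 6).2
  have key : (1 - 0.317 ^ 2) * log 2 < H2 0.317 * log 2 := by
    rw [H2_mul_log_two]
    norm_num at hp hq ⊢
    linarith [log_two_gt_d9]
  linarith [lt_of_mul_lt_mul_right key (log_pos one_lt_two).le]

lemma QCUB_self (p : ℝ) : QCUB p p = 1 - H2 p := by
  rw [QCUB, max_self]

lemma mul_le_QSLB (p q : ℝ) : p * q ≤ QSLB p q :=
  le_add_of_nonneg_right (le_max_left _ _)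

lemma one_sub_H2_le_sq {p : ℝ} (hp : p ∈ Icc 0.317 1) : 1 - H2 p ≤ p ^ 2 := by
  have h := concaveOn_H2_add_sq.min_le_of_mem_Icc (by norm_num) (right_mem_Icc.2 zero_le_one) hp
  rw [H2_one, min_eq_right (by linarith [one_sub_H2_lt_sq_317])] at h
  linarith

lemma exists_one_sub_H2_eq_sq : ∃ p ∈ Ioo (0.316 : ℝ) 0.317, 1 - H2 p = p ^ 2 := by
  have hcont : Continuous fun p ↦ H2 p + p ^ 2 := continuous_H2.add (continuous_pow 2)
  obtain ⟨p, hp, h⟩ := intermediate_value_Ioo (a := 0.316) (b := 0.317) (by norm_num)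
    hcont.continuousOn (show (1 : ℝ) ∈ Ioo _ _ from
      ⟨by linarith [sq_lt_one_sub_H2_316], by linarith [one_sub_H2_lt_sq_317]⟩)
  exact ⟨p, hp, by linarith [h]⟩

theorem corollary2_threshold :
    (∃ p₁ ∈ Set.Ioo (0.316:ℝ) 0.317, 1 - H2 p₁ = p₁ ^ 2) ∧
    (∀ p ∈ Set.Icc (0.317:ℝ) 1, 1 - H2 p ≤ p ^ 2) ∧
    (∀ p ∈ Set.Icc (0.317:ℝ) 1, QCUB p p ≤ QSLB p p) := by
  refine ⟨exists_one_sub_H2_eq_sq, fun p hp ↦ one_sub_H2_le_sq hp, fun p hp ↦ ?_⟩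
  rw [QCUB_self]
  linarith [one_sub_H2_le_sq hp, mul_le_QSLB p p, sq p]
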